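/- Suppose σ < 0 and fix α > 0. Define f(T) = ∫_{(0,∞)^p} (1 − e^{−α ψ(2Tw₁,…,2Tw_p)}) ρ(dw) and let ρ̄ = τ^σ/(−σ) denote the (finite) total mass of ρ. Then f(T) converges to the finite positive limit ρ̄ (1 − e^{−α ρ̄}) as T → ∞. Consequently the expected number of nodes E[V_{α,T}] = α f(T) satisfies E[V_{α,T}] = Θ(1) as T → ∞. -/

import Mathlib

open MeasureTheory Real Filter

/-- The Lévy measure of a generalized gamma process: the measure on `(0,∞)` with density
`w ↦ w^(-1-σ) * exp(-τ*w) / Γ(1-σ)` with respect to Lebesgue measure. -/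
noncomputable def rho0 (σ τ : ℝ) : Measure ℝ :=
  ((volume : Measure ℝ).restrict (Set.Ioi 0)).withDensity
    (fun w => ENNReal.ofReal (w ^ (-1 - σ) * Real.exp (-τ * w) / Real.Gamma (1 - σ)))

/-- The Gamma(a,b) probability measure on `(0,∞)`, with density
`x ↦ b^a x^(a−1) e^(−b x) / Γ(a)` with respect to Lebesgue measure. -/
noncomputable def gammaM (a b : ℝ) : Measure ℝ :=
  ((volume : Measure ℝ).restrict (Set.Ioi 0)).withDensity
    (fun x => ENNReal.ofReal (b ^ a * x ^ (a - 1) * Real.exp (-b * x) / Real.Gamma a))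

/-- The multivariate Lévy measure `ρ` of the compound CRM with independent gamma scores:
the pushforward of `ρ₀ ⊗ Gamma(a₁,b₁) ⊗ ⋯ ⊗ Gamma(a_p,b_p)` under
`(w₀, β₁, …, β_p) ↦ (w₀β₁, …, w₀β_p)`. -/
noncomputable def rhoC (σ τ : ℝ) (p : ℕ) (a b : Fin p → ℝ) : Measure (Fin p → ℝ) :=
  Measure.map (fun x : ℝ × (Fin p → ℝ) => fun k => x.1 * x.2 k)
    ((rho0 σ τ).prod (Measure.pi fun k => gammaM (a k) (b k)))

/-- The Laplace exponent `ψ(t) = ∫ (1 − e^{−Σ_k t_k v_k}) ρ(dv)` of the compound CRM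
(a finite quantity, expressed here as a Bochner integral). -/
noncomputable def psi (σ τ : ℝ) (p : ℕ) (a b : Fin p → ℝ) (t : Fin p → ℝ) : ℝ :=
  ∫ v, (1 - Real.exp (-∑ k, t k * v k)) ∂(rhoC σ τ p a b)

/-- `∫ (1 − e^{−α ψ(2Tw₁,…,2Tw_p)}) ρ(dw)`, so that `E[V_{α,T}]` equals `α` times this. -/
noncomputable def nodesIntegral (σ τ : ℝ) (p : ℕ) (a b : Fin p → ℝ) (α T : ℝ) : ℝ :=
  ∫ w, (1 - Real.exp (-α * psi σ τ p a b (fun k => 2 * T * w k))) ∂(rhoC σ τ p a b)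

/-!
Since `σ < 0`, `ρ₀` has finite mass `ρ̄ = τ^σ/(-σ)` (a Gamma integral) and the Gamma scores are
probability measures, so `ρ` is a finite measure of mass `ρ̄` concentrated on `(0,∞)^p`. For such
`w`, `Σ_k 2T w_k v_k → ∞` for `ρ`-a.e. `v`, so dominated convergence (integrand in `[0,1]`, finite
measure) gives `ψ(2Tw) → ρ̄`; a second application gives `f(T) → ρ̄ (1 - e^{-αρ̄}) > 0`, and a
function with positive limit is eventually between half and twice that limit.
-/

open Topology

section DominatedConvergence

variable {X ι : Type*} [MeasurableSpace X] {μ : Measure X} [IsFiniteMeasure μ]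

lemma norm_one_sub_exp_le_one {x : ℝ} (hx : x ≤ 0) : ‖1 - exp x‖ ≤ 1 := by
  have h₀ := exp_pos x
  have h₁ := exp_le_one_iff.mpr hx
  rw [norm_eq_abs, abs_le]
  constructor <;> linarith

lemma tendsto_integral_of_norm_le_const_of_tendsto {l : Filter ι} [l.IsCountablyGenerated]
    {F : ι → X → ℝ} {C L : ℝ} (hF : ∀ᶠ i in l, AEStronglyMeasurable (F i) μ)
    (hbound : ∀ᶠ i in l, ∀ᵐ x ∂μ, ‖F i x‖ ≤ C) (hlim : ∀ᵐ x ∂μ, Tendsto (F · x) l (𝓝 L)) :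
    Tendsto (fun i => ∫ x, F i x ∂μ) l (𝓝 (μ.real Set.univ * L)) := by
  simpa only [integral_const, smul_eq_mul] using
    tendsto_integral_filter_of_dominated_convergence _ hF hbound (integrable_const C) hlim

lemma tendsto_integral_one_sub_exp_neg_mul_atTop {g : X → ℝ} (hg : Measurable g)
    (hpos : ∀ᵐ x ∂μ, 0 < g x) :
    Tendsto (fun T : ℝ => ∫ x, 1 - exp (-(T * g x)) ∂μ) atTop (𝓝 (μ.real Set.univ)) := by
  rw [← mul_one (μ.real Set.univ)]
  refine tendsto_integral_of_norm_le_const_of_tendsto (C := 1)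
    (.of_forall fun T => (by fun_prop : Measurable _).aestronglyMeasurable) ?_ ?_
  · filter_upwards [eventually_ge_atTop 0] with T hT
    filter_upwards [hpos] with x hx
    exact norm_one_sub_exp_le_one (neg_nonpos.mpr (mul_nonneg hT hx.le))
  · filter_upwards [hpos] with x hx
    simpa using (tendsto_exp_neg_atTop_nhds_zero.comp
      (tendsto_id.atTop_mul_const hx)).const_sub 1

end DominatedConvergence

lemma lintegral_Ioi_ofReal_mul_rpow_mul_exp_neg_mul {C a r : ℝ} (hC : 0 ≤ C) (ha : 0 < a)
    (hr : 0 < r) :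
    ∫⁻ x in Set.Ioi 0, ENNReal.ofReal (C * x ^ (a - 1) * exp (-r * x)) =
      ENNReal.ofReal (C * Gamma a / r ^ a) := by
  have hint : IntegrableOn (fun x : ℝ => x ^ (a - 1) * exp (-r * x)) (Set.Ioi 0) := by
    simpa using
      integrableOn_rpow_mul_exp_neg_mul_rpow (p := 1) (s := a - 1) (by linarith) one_pos hr
  rw [← ofReal_integral_eq_lintegral_ofReal]
  · simp_rw [mul_assoc, neg_mul]
    rw [integral_const_mul, integral_rpow_mul_exp_neg_mul_Ioi ha hr, one_div, inv_rpow hr.le]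
    congr 1
    ring
  · simpa only [mul_assoc] using hint.const_mul C
  · filter_upwards [ae_restrict_mem measurableSet_Ioi] with x (hx : 0 < x)
    positivity

lemma isProbabilityMeasure_gammaM {a b : ℝ} (ha : 0 < a) (hb : 0 < b) :
    IsProbabilityMeasure (gammaM a b) := by
  constructor
  have hΓ := Gamma_pos_of_pos ha
  have hba := rpow_pos_of_pos hb a
  rw [gammaM, withDensity_apply _ MeasurableSet.univ, Measure.restrict_univ]
  simp_rw [mul_div_right_comm _ (exp _), mul_div_right_comm (b ^ a)]
  rw [lintegral_Ioi_ofReal_mul_rpow_mul_exp_neg_mul (by positivity) ha hb]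
  field_simp
  simp

lemma rho0_univ {σ τ : ℝ} (hσ : σ < 0) (hτ : 0 < τ) :
    rho0 σ τ Set.univ = ENNReal.ofReal (τ ^ σ / (-σ)) := by
  have hσ' : 0 < -σ := neg_pos.mpr hσ
  have hΓ := Gamma_pos_of_pos hσ'
  have hΓ₁ : Gamma (1 - σ) = -σ * Gamma (-σ) := by
    rw [← Gamma_add_one hσ'.ne']
    ring_nf
  rw [rho0, withDensity_apply _ MeasurableSet.univ, Measure.restrict_univ]
  simp_rw [div_eq_inv_mul _ (Gamma _), ← mul_assoc, show -1 - σ = -σ - 1 by ring]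
  rw [lintegral_Ioi_ofReal_mul_rpow_mul_exp_neg_mul (by rw [hΓ₁]; positivity) hσ' hτ, hΓ₁,
    rpow_neg hτ.le]
  congr 1
  field_simp

lemma ae_pos_rho0 (σ τ : ℝ) : ∀ᵐ w ∂rho0 σ τ, 0 < w :=
  (withDensity_absolutelyContinuous _ _).ae_le (ae_restrict_mem measurableSet_Ioi)

lemma ae_pos_gammaM (a b : ℝ) : ∀ᵐ x ∂gammaM a b, 0 < x :=
  (withDensity_absolutelyContinuous _ _).ae_le (ae_restrict_mem measurableSet_Ioi)

instance (σ τ : ℝ) : SigmaFinite (rho0 σ τ) := by unfold rho0; infer_instance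

instance (a b : ℝ) : SigmaFinite (gammaM a b) := by unfold gammaM; infer_instance

instance (σ τ : ℝ) (p : ℕ) (a b : Fin p → ℝ) : SFinite (rhoC σ τ p a b) := by
  unfold rhoC; infer_instance

section Compound

variable {σ τ : ℝ} {p : ℕ} {a b : Fin p → ℝ}

lemma measurable_fst_mul_snd_apply (p : ℕ) :
    Measurable (fun x : ℝ × (Fin p → ℝ) => fun k => x.1 * x.2 k) :=
  measurable_pi_lambda _ fun k => measurable_fst.mul ((measurable_pi_apply k).comp measurable_snd)

lemma rhoC_univ (hσ : σ < 0) (hτ : 0 < τ) (ha : ∀ k, 0 < a k) (hb : ∀ k, 0 < b k) :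
    rhoC σ τ p a b Set.univ = ENNReal.ofReal (τ ^ σ / (-σ)) := by
  have := fun k => isProbabilityMeasure_gammaM (ha k) (hb k)
  rw [rhoC, Measure.map_apply (measurable_fst_mul_snd_apply p) MeasurableSet.univ,
    Set.preimage_univ, ← Set.univ_prod_univ, Measure.prod_prod, rho0_univ hσ hτ, measure_univ,
    mul_one]

lemma ae_forall_pos_rhoC : ∀ᵐ v ∂rhoC σ τ p a b, ∀ k, 0 < v k := by
  have hβ : ∀ᵐ β ∂Measure.pi fun k => gammaM (a k) (b k), ∀ k, 0 < β k :=
    Measure.ae_pi_le_pi (eventually_pi fun k => ae_pos_gammaM (a k) (b k))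
  rw [rhoC, ae_map_iff (measurable_fst_mul_snd_apply p).aemeasurable (by measurability)]
  filter_upwards [Measure.quasiMeasurePreserving_fst.ae (ae_pos_rho0 σ τ),
    Measure.quasiMeasurePreserving_snd.ae hβ] with x hx hβx k using mul_pos hx (hβx k)

lemma measurable_psi : Measurable (psi σ τ p a b) :=
  (Continuous.stronglyMeasurable (by fun_prop : Continuous fun x : (Fin p → ℝ) × (Fin p → ℝ) =>
    1 - exp (-∑ k, x.1 k * x.2 k))).integral_prod_right'.measurable

lemma psi_nonneg {t : Fin p → ℝ} (ht : ∀ k, 0 ≤ t k) : 0 ≤ psi σ τ p a b t := by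
  refine integral_nonneg_of_ae ?_
  filter_upwards [ae_forall_pos_rhoC] with v hv
  have : 0 ≤ ∑ k, t k * v k := Finset.sum_nonneg fun k _ => mul_nonneg (ht k) (hv k).le
  simpa using exp_le_one_iff.mpr (neg_nonpos.mpr this)

lemma isFiniteMeasure_rhoC (hσ : σ < 0) (hτ : 0 < τ) (ha : ∀ k, 0 < a k) (hb : ∀ k, 0 < b k) :
    IsFiniteMeasure (rhoC σ τ p a b) :=
  ⟨by rw [rhoC_univ hσ hτ ha hb]; exact ENNReal.ofReal_lt_top⟩

lemma rhoC_real_univ (hσ : σ < 0) (hτ : 0 < τ) (ha : ∀ k, 0 < a k) (hb : ∀ k, 0 < b k) :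
    (rhoC σ τ p a b).real Set.univ = τ ^ σ / (-σ) := by
  rw [measureReal_def, rhoC_univ hσ hτ ha hb,
    ENNReal.toReal_ofReal (div_pos (rpow_pos_of_pos hτ σ) (neg_pos.mpr hσ)).le]

lemma tendsto_psi_atTop (hσ : σ < 0) (hτ : 0 < τ) (hp : 0 < p) (ha : ∀ k, 0 < a k)
    (hb : ∀ k, 0 < b k) {w : Fin p → ℝ} (hw : ∀ k, 0 < w k) :
    Tendsto (fun T : ℝ => psi σ τ p a b (fun k => 2 * T * w k)) atTop (𝓝 (τ ^ σ / (-σ))) := by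
  have := isFiniteMeasure_rhoC hσ hτ ha hb
  have : Nonempty (Fin p) := ⟨⟨0, hp⟩⟩
  have hpsi : ∀ T : ℝ, psi σ τ p a b (fun k => 2 * T * w k) =
      ∫ v, 1 - exp (-(T * ∑ k, 2 * w k * v k)) ∂rhoC σ τ p a b := by
    intro T
    simp only [psi, Finset.mul_sum, ← mul_assoc, mul_comm T 2]
  simp_rw [hpsi, ← rhoC_real_univ hσ hτ ha hb]
  refine tendsto_integral_one_sub_exp_neg_mul_atTop (by fun_prop) ?_
  filter_upwards [ae_forall_pos_rhoC] with v hv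
  exact Finset.sum_pos (fun k _ => mul_pos (mul_pos two_pos (hw k)) (hv k)) Finset.univ_nonempty

lemma tendsto_nodesIntegral_atTop (hσ : σ < 0) (hτ : 0 < τ) (hp : 0 < p) (ha : ∀ k, 0 < a k)
    (hb : ∀ k, 0 < b k) {α : ℝ} (hα : 0 ≤ α) :
    Tendsto (nodesIntegral σ τ p a b α) atTop
      (𝓝 (τ ^ σ / (-σ) * (1 - exp (-α * (τ ^ σ / (-σ)))))) := by
  have := isFiniteMeasure_rhoC hσ hτ ha hb
  have := measurable_psi (σ := σ) (τ := τ) (a := a) (b := b)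
  nth_rw 1 [← rhoC_real_univ hσ hτ ha hb]
  refine tendsto_integral_of_norm_le_const_of_tendsto (C := 1)
    (.of_forall fun T => (by fun_prop : Measurable _).aestronglyMeasurable) ?_ ?_
  · filter_upwards [eventually_ge_atTop 0] with T hT
    filter_upwards [ae_forall_pos_rhoC] with w hw
    have := psi_nonneg (σ := σ) (τ := τ) (a := a) (b := b)
      (fun k => mul_nonneg (mul_nonneg zero_le_two hT) (hw k).le)
    exact norm_one_sub_exp_le_one (by nlinarith)
  · filter_upwards [ae_forall_pos_rhoC] with w hw
    exact ((tendsto_psi_atTop hσ hτ hp ha hb hw).const_mul (-α)).rexp.const_sub 1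

end Compound

lemma exists_pos_bounds_of_tendsto_atTop {f : ℝ → ℝ} {L : ℝ} (hf : Tendsto f atTop (𝓝 L))
    (hL : 0 < L) :
    ∃ c₁ c₂ T₀ : ℝ, 0 < c₁ ∧ c₁ ≤ c₂ ∧ 0 < T₀ ∧ ∀ T ≥ T₀, c₁ ≤ f T ∧ f T ≤ c₂ := by
  obtain ⟨T₁, hT₁⟩ :=
    eventually_atTop.mp (hf (Icc_mem_nhds (half_lt_self hL) (lt_two_mul_self hL)))
  exact ⟨L / 2, 2 * L, max T₁ 1, by positivity, by linarith, by positivity,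
    fun T hT => hT₁ T (le_of_max_le_left hT)⟩

/-- For `σ < 0` and fixed `α > 0`, with `ρ̄ = τ^σ/(−σ)` the total mass of `ρ`,
`f(T) = ∫ (1 − e^{−α ψ(2Tw)}) ρ(dw) → ρ̄ (1 − e^{−α ρ̄})` as `T → ∞`, a finite positive
limit; consequently `E[V_{α,T}] = α f(T) = Θ(1)` as `T → ∞`. -/
theorem nodes_growth_sigma_neg (σ τ : ℝ) (hσ : σ < 0) (hτ : 0 < τ) (p : ℕ) (hp : 1 ≤ p)
    (a b : Fin p → ℝ) (ha : ∀ k, 0 < a k) (hb : ∀ k, 0 < b k) (α : ℝ) (hα : 0 < α) :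
    Tendsto (fun T : ℝ => nodesIntegral σ τ p a b α T) atTop
      (nhds ((τ ^ σ / (-σ)) * (1 - Real.exp (-α * (τ ^ σ / (-σ)))))) ∧
    0 < (τ ^ σ / (-σ)) * (1 - Real.exp (-α * (τ ^ σ / (-σ)))) ∧
    ∃ c₁ c₂ T₀ : ℝ, 0 < c₁ ∧ c₁ ≤ c₂ ∧ 0 < T₀ ∧ ∀ T ≥ T₀,
      c₁ ≤ α * nodesIntegral σ τ p a b α T ∧ α * nodesIntegral σ τ p a b α T ≤ c₂ := by
  have hmass : 0 < τ ^ σ / (-σ) := div_pos (rpow_pos_of_pos hτ σ) (neg_pos.mpr hσ)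
  have hlim := tendsto_nodesIntegral_atTop hσ hτ hp ha hb hα.le
  have hpos : 0 < τ ^ σ / (-σ) * (1 - exp (-α * (τ ^ σ / (-σ)))) := mul_pos hmass
    (sub_pos.mpr (exp_lt_one_iff.mpr (mul_neg_of_neg_of_pos (neg_neg_of_pos hα) hmass)))
  exact ⟨hlim, hpos, exists_pos_bounds_of_tendsto_atTop (hlim.const_mul α) (mul_pos hα hpos)⟩
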